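/- Let k ≥ 1, let A be a real m × d matrix, and let E : ℝ^m → ℝ^d be a function whose values are all k-sparse vectors and which satisfies E(A f) = f for every k-sparse vector f ∈ ℝ^d. Then every set of at most 2k columns of A is linearly independent; equivalently, spark(A) > 2k. -/

import Mathlib

/-!
If `A f = A g` for `k`-sparse `f` and `g`, then `f = E (A f) = E (A g) = g`, so `A` is injective
on `k`-sparse vectors. A vector supported on at most `2k` columns splits as `f + g` with `f` and
`g` both `k`-sparse; if it lies in the kernel of `A`, then `A f = A (-g)`, hence `f = -g` and
the vector is zero. So no nontrivial linear relation among at most `2k` columns exists.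
-/

open Function Set Matrix

theorem exists_add_eq_ncard_support_le {ι G : Type*} [AddMonoid G] {h : ι → G}
    (hfin : (support h).Finite) {a b : ℕ} (hh : (support h).ncard ≤ a + b) :
    ∃ f g : ι → G, f + g = h ∧ (support f).ncard ≤ a ∧ (support g).ncard ≤ b := by
  obtain ⟨t, hth, ht⟩ := exists_subset_card_eq (min_le_right a (support h).ncard)
  refine ⟨t.indicator h, tᶜ.indicator h, indicator_self_add_compl t h, ?_, ?_⟩
  · rw [support_indicator, inter_eq_left.mpr hth, ht]
    exact min_le_left _ _
  · rw [support_indicator, ← sdiff_eq_compl_inter, ncard_sdiff hth (hfin.subset hth)]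
    omega

theorem eq_zero_of_injOn_ncard_support_le {ι G M F : Type*} [AddGroup G] [AddGroup M]
    [FunLike F (ι → G) M] [AddMonoidHomClass F (ι → G) M] {φ : F} {k : ℕ}
    (hφ : InjOn φ {f | (support f).ncard ≤ k}) {h : ι → G} (hfin : (support h).Finite)
    (hh : (support h).ncard ≤ k + k) (hφh : φ h = 0) : h = 0 := by
  obtain ⟨f, g, rfl, hf, hg⟩ := exists_add_eq_ncard_support_le hfin hh
  have hfg : φ f = φ (-g) := by
    rw [map_neg, eq_neg_iff_add_eq_zero, ← map_add, hφh]
  rw [hφ hf (by rwa [mem_ofPred_eq, support_neg]) hfg, neg_add_cancel]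

theorem Matrix.linearIndependent_cols_of_mulVec_eq_zero {m n R : Type*} [Fintype n]
    [CommRing R] {A : Matrix m n R} {S : Finset n}
    (hA : ∀ v : n → R, support v ⊆ S → A *ᵥ v = 0 → v = 0) :
    LinearIndependent R (fun j : S => (fun i => A i j : m → R)) := by
  show LinearIndepOn R (fun j i => A i j) (S : Set n)
  refine linearIndepOn_iff.mpr fun l hl hl0 => ?_
  have : Finsupp.linearCombination R (fun j i => A i j) l = A *ᵥ l := by
    ext i
    simp [Finsupp.linearCombination_apply, Finsupp.sum_fintype, Finset.sum_apply, mulVec,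
      dotProduct, mul_comm]
  refine DFunLike.coe_injective (hA l ?_ (this ▸ hl0))
  rwa [Finsupp.fun_support_eq, ← Finsupp.mem_supported R]

theorem roundtrip_implies_spark_gt_general (k m d : ℕ)
    (A : Matrix (Fin m) (Fin d) ℝ) (E : (Fin m → ℝ) → (Fin d → ℝ))
    (hrt : ∀ f : Fin d → ℝ, (Function.support f).ncard ≤ k → E (A.mulVec f) = f) :
    ∀ S : Finset (Fin d), S.card ≤ 2 * k →
      LinearIndependent ℝ (fun j : S => (fun i => A i j : Fin m → ℝ)) := by
  intro S hS
  have hinj : InjOn A.mulVecLin {f | (support f).ncard ≤ k} :=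
    LeftInvOn.injOn (f₁' := E) fun f hf => hrt f hf
  refine linearIndependent_cols_of_mulVec_eq_zero fun v hv hAv => ?_
  refine eq_zero_of_injOn_ncard_support_le hinj (toFinite _) ?_ hAv
  calc (support v).ncard ≤ (S : Set (Fin d)).ncard := ncard_le_ncard hv
    _ = S.card := ncard_coe_finset S
    _ ≤ k + k := by omega

/-- The round-trip property implies that every set of at most `2k` columns
of `A` is linearly independent, i.e. `spark(A) > 2k`. -/
theorem roundtrip_implies_spark_gt (k m d : ℕ) (hk : 1 ≤ k)
    (A : Matrix (Fin m) (Fin d) ℝ) (E : (Fin m → ℝ) → (Fin d → ℝ))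
    (hE : ∀ x : Fin m → ℝ, (Function.support (E x)).ncard ≤ k)
    (hrt : ∀ f : Fin d → ℝ, (Function.support f).ncard ≤ k → E (A.mulVec f) = f) :
    ∀ S : Finset (Fin d), S.card ≤ 2 * k →
      LinearIndependent ℝ (fun j : S => (fun i => A i j : Fin m → ℝ)) :=
  roundtrip_implies_spark_gt_general k m d A E hrt
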